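/- arXiv:math/0303366 — 2 statements merged into one kernel-verified Lean document; each statement's English description precedes it below -/
import Mathlib

section
/- Let n ≥ 1, let S be a unit packing in ℝⁿ, let u be a unit vector in EuclideanSpace ℝ (Fin n), let c ∈ ℝ, and let d ≥ 0. Define f : EuclideanSpace ℝ (Fin n) → EuclideanSpace ℝ (Fin n) by f x = x + d • u if ⟪x, u⟫ ≥ c and f x = x otherwise. Then for all points p and q, dist (f p) (f q) ≥ dist p q; consequently f is injective on S and the image f '' S is again a unit packing. -/
open RealInnerProductSpace

/-- A (unit) packing in ℝⁿ: a set of centers with pairwise distances at least 2. -/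
def IsPacking {n : ℕ} (S : Set (EuclideanSpace ℝ (Fin n))) : Prop :=
  ∀ p ∈ S, ∀ q ∈ S, p ≠ q → dist p q ≥ 2

lemma norm_add_smul_ge {n : ℕ} (u v : EuclideanSpace ℝ (Fin n)) (d : ℝ)
    (hv : 0 ≤ ⟪v, u⟫) (hd : 0 ≤ d) : ‖v + d • u‖ ≥ ‖v‖ := by
  have h : ‖v‖ ^ 2 ≤ ‖v + d • u‖ ^ 2 := by
    have := @norm_add_sq_real (EuclideanSpace ℝ (Fin n)) _ _ v (d • u)
    rw [this, real_inner_smul_right]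
    nlinarith [sq_nonneg ‖d • u‖, mul_nonneg hd hv]
  nlinarith [norm_nonneg (v + d • u), norm_nonneg v]
  
/-- Shifting all points on one side of a hyperplane by a nonnegative multiple of the
unit normal does not decrease distances; hence it is injective on a packing and the
image is again a packing. -/
theorem gap_defect_is_packing (n : ℕ) (hn : 1 ≤ n)
    (S : Set (EuclideanSpace ℝ (Fin n))) (hS : IsPacking S)
    (u : EuclideanSpace ℝ (Fin n)) (hu : ‖u‖ = 1) (c d : ℝ) (hd : 0 ≤ d)
    (f : EuclideanSpace ℝ (Fin n) → EuclideanSpace ℝ (Fin n))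
    (hf : ∀ x, f x = if ⟪x, u⟫ ≥ c then x + d • u else x) :
    (∀ p q, dist (f p) (f q) ≥ dist p q) ∧ Set.InjOn f S ∧ IsPacking (f '' S) := by
  have key : ∀ p q, dist (f p) (f q) ≥ dist p q := by
    intro p q
    rw [hf p, hf q]
    by_cases hp : ⟪p, u⟫ ≥ c <;> by_cases hq : ⟪q, u⟫ ≥ c <;>
      simp only [hp, hq, if_true, if_false, dist_eq_norm]
    · simp [add_sub_add_comm]
    · have : p + d • u - q = (p - q) + d • u := by abel
      rw [this]
      apply norm_add_smul_ge
      · rw [inner_sub_left]; linarith [lt_of_not_ge hq]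
      · exact hd
    · rw [norm_sub_rev]
      have : q + d • u - p = (q - p) + d • u := by abel
      rw [this, norm_sub_rev p q]
      apply norm_add_smul_ge
      · rw [inner_sub_left]; linarith [lt_of_not_ge hp]
      · exact hd
    · exact le_refl _
  refine ⟨key, ?_, ?_⟩
  · intro p _ q _ h
    have := key p q
    rw [h, dist_self] at this
    exact dist_le_zero.mp this
  · rintro _ ⟨p, hp, rfl⟩ _ ⟨q, hq, rfl⟩ hne
    have hpq : p ≠ q := fun h => hne (by rw [h])
    exact le_trans (hS p hp q hq hpq) (key p q)
end

section
/- Let d ≥ 2, and let C̃ be the packing obtained from the honeycomb circle packing C by moving every center on or above the x-axis up by the vector (0, d), i.e., C̃ = f '' C where f (x, y) = (x, y + d) if y ≥ 0 and f (x, y) = (x, y) otherwise. Then C̃ is not 1-saturated: there exists a point p ∈ EuclideanSpace ℝ (Fin 2) with dist p q ≥ 2 for every q ∈ C̃, so that C̃ ∪ {p} is again a packing. -/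
open RealInnerProductSpace

/-- The honeycomb circle packing: centers at (2i + j, √3 j) for integers i, j. -/
def honeycomb : Set (EuclideanSpace ℝ (Fin 2)) :=
  {p | ∃ i j : ℤ, p = (WithLp.equiv 2 (Fin 2 → ℝ)).symm ![2 * (i : ℝ) + j, Real.sqrt 3 * j]}

/-!
The origin is a center of the honeycomb packing lying on the x-axis, and its slot stays free
after the closed upper half-plane is lifted by `d ≥ 2`: lifted centers are at height at least
`d`, while the centers that stay put are honeycomb centers other than the origin. The lifted
configuration is still a packing, because the map is a translation on each half-plane and the
two images are vertically separated by at least `d`.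
-/

lemma IsPacking.union_singleton {n : ℕ} {S : Set (EuclideanSpace ℝ (Fin n))}
    {p : EuclideanSpace ℝ (Fin n)} (hS : IsPacking S) (hp : ∀ q ∈ S, 2 ≤ dist p q) :
    IsPacking (S ∪ {p}) := by
  rintro a (ha | rfl) b (hb | rfl) hab
  · exact hS a ha b hb hab
  · exact dist_comm a b ▸ hp a ha
  · exact hp b hb
  · exact absurd rfl hab

lemma EuclideanSpace.dist_sq_eq_fin_two (x y : EuclideanSpace ℝ (Fin 2)) :
    dist x y ^ 2 = (x 0 - y 0) ^ 2 + (x 1 - y 1) ^ 2 := by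
  rw [EuclideanSpace.dist_eq, Real.sq_sqrt (by positivity), Fin.sum_univ_two,
    Real.dist_eq, Real.dist_eq, sq_abs, sq_abs]

lemma one_le_sq_add_mul_add_sq {a b : ℤ} (h : a ≠ 0 ∨ b ≠ 0) : 1 ≤ a ^ 2 + a * b + b ^ 2 := by
  have : 0 < a ^ 2 + b ^ 2 := by rcases h with h | h <;> positivity
  nlinarith [sq_nonneg (a + b)]

lemma honeycomb_isPacking : IsPacking honeycomb := by
  rintro _ ⟨i, j, rfl⟩ _ ⟨i', j', rfl⟩ hne
  have hij : i - i' ≠ 0 ∨ j - j' ≠ 0 := by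
    by_contra! h
    rw [sub_eq_zero.1 h.1, sub_eq_zero.1 h.2] at hne
    exact hne rfl
  have hform : (1 : ℝ) ≤ (i - i') ^ 2 + (i - i') * (j - j') + (j - j') ^ 2 := by
    exact_mod_cast one_le_sq_add_mul_add_sq hij
  refine (pow_le_pow_iff_left₀ zero_le_two dist_nonneg two_ne_zero).1 ?_
  -- the squared distance is `4 (a² + ab + b²)` with `(a, b) = (i - i', j - j')`
  rw [EuclideanSpace.dist_sq_eq_fin_two]
  simp only [WithLp.equiv_symm_apply, PiLp.toLp_apply, Matrix.cons_val_zero,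
    Matrix.cons_val_one]
  nlinarith [Real.sq_sqrt (show (0 : ℝ) ≤ 3 by norm_num)]

lemma zero_mem_honeycomb : 0 ∈ honeycomb :=
  ⟨0, 0, by ext k; fin_cases k <;> simp⟩

noncomputable def gapDefect (d : ℝ) (x : EuclideanSpace ℝ (Fin 2)) : EuclideanSpace ℝ (Fin 2) :=
  if 0 ≤ x 1 then x + EuclideanSpace.single 1 d else x

section gapDefect

variable {d : ℝ} {x y : EuclideanSpace ℝ (Fin 2)}

lemma gapDefect_of_nonneg (hx : 0 ≤ x 1) : gapDefect d x = x + EuclideanSpace.single 1 d :=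
  if_pos hx

lemma gapDefect_of_neg (hx : x 1 < 0) : gapDefect d x = x :=
  if_neg hx.not_ge

lemma le_dist_gapDefect_of_nonneg_of_nonpos (hx : 0 ≤ x 1) (hy : y 1 ≤ 0) :
    d ≤ dist (gapDefect d x) y := by
  rw [gapDefect_of_nonneg hx]
  have h := PiLp.dist_apply_le (x + EuclideanSpace.single 1 d) y 1
  simp only [Real.dist_eq, PiLp.add_apply, PiLp.single_apply, if_true] at h
  linarith [le_abs_self (x 1 + d - y 1)]

lemma IsPacking.image_gapDefect {S : Set (EuclideanSpace ℝ (Fin 2))} (hd : 2 ≤ d)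
    (hS : IsPacking S) : IsPacking (gapDefect d '' S) := by
  rintro _ ⟨x, hx, rfl⟩ _ ⟨y, hy, rfl⟩ hne
  have hxy : x ≠ y := by rintro rfl; exact hne rfl
  rcases le_or_gt 0 (x 1) with hx1 | hx1 <;> rcases le_or_gt 0 (y 1) with hy1 | hy1
  · rw [gapDefect_of_nonneg hx1, gapDefect_of_nonneg hy1, dist_add_right]
    exact hS x hx y hy hxy
  · rw [gapDefect_of_neg hy1]
    exact hd.trans (le_dist_gapDefect_of_nonneg_of_nonpos hx1 hy1.le)
  · rw [gapDefect_of_neg hx1, dist_comm]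
    exact hd.trans (le_dist_gapDefect_of_nonneg_of_nonpos hy1 hx1.le)
  · rw [gapDefect_of_neg hx1, gapDefect_of_neg hy1]
    exact hS x hx y hy hxy

lemma IsPacking.two_le_dist_image_gapDefect {S : Set (EuclideanSpace ℝ (Fin 2))}
    {p : EuclideanSpace ℝ (Fin 2)} (hd : 2 ≤ d) (hS : IsPacking S) (hp : p ∈ S) (hp1 : p 1 = 0) :
    ∀ q ∈ gapDefect d '' S, 2 ≤ dist p q := by
  rintro _ ⟨q, hq, rfl⟩
  rcases le_or_gt 0 (q 1) with hq1 | hq1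
  · rw [dist_comm]
    exact hd.trans (le_dist_gapDefect_of_nonneg_of_nonpos hq1 hp1.le)
  · rw [gapDefect_of_neg hq1]
    exact hS p hp q hq fun h => hq1.ne (h ▸ hp1)

end gapDefect

/-- If the gap has width d ≥ 2, the honeycomb packing with a gap defect along the x-axis
is not even 1-saturated: an extra circle fits in the gap. -/
theorem honeycomb_wide_gap_not_one_saturated (d : ℝ) (hd : 2 ≤ d)
    (f : EuclideanSpace ℝ (Fin 2) → EuclideanSpace ℝ (Fin 2))
    (hf : ∀ x, f x = if x 1 ≥ 0 then (WithLp.equiv 2 (Fin 2 → ℝ)).symm ![x 0, x 1 + d] else x) :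
    ∃ p : EuclideanSpace ℝ (Fin 2), (∀ q ∈ f '' honeycomb, dist p q ≥ 2) ∧
      IsPacking (f '' honeycomb ∪ {p}) := by
  obtain rfl : f = gapDefect d := by
    funext x
    rw [hf, gapDefect]
    split_ifs
    · ext k; fin_cases k <;> simp
    · rfl
  have hfree := honeycomb_isPacking.two_le_dist_image_gapDefect hd zero_mem_honeycomb rfl
  exact ⟨0, hfree, (honeycomb_isPacking.image_gapDefect hd).union_singleton hfree⟩
end
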